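/- arXiv:2305.00276 — 2 statements merged into one kernel-verified Lean document; each statement's English description precedes it below -/
import Mathlib

section
/- Let Γ be a semicomplete weakly distance-regular digraph of diameter d and girth g that is not an undirected graph (i.e., A(Γ) is not symmetric). Then d=2, g≤3, and ∂̃(Γ)={(0,0),(1,2),(2,1)} or ∂̃(Γ)={(0,0),(1,1),(1,2),(2,1)}. -/
namespace Paper

/-- A digraph: a set of vertices together with a set of arcs (ordered pairs of
distinct vertices). -/
structure Digraph (V : Type*) where
  Adj : V → V → Prop
  loopless : ∀ v : V, ¬ Adj v v

variable {V V' : Type*}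

namespace Digraph

/-- There is a directed walk of length `n` from `x` to `y`. -/
def HasPath (G : Digraph V) (x y : V) (n : ℕ) : Prop :=
  ∃ f : ℕ → V, f 0 = x ∧ f n = y ∧ ∀ k < n, G.Adj (f k) (f (k + 1))

/-- The distance `∂(x,y)`: the length of a shortest directed path from `x` to `y`. -/
noncomputable def dist (G : Digraph V) (x y : V) : ℕ :=
  sInf {n | G.HasPath x y n}

/-- The two-way distance `∂̃(x,y) = (∂(x,y), ∂(y,x))`. -/
noncomputable def tdist (G : Digraph V) (x y : V) : ℕ × ℕ :=
  (G.dist x y, G.dist y x)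

/-- The two-way distance set `∂̃(Γ)`. -/
def tdSet (G : Digraph V) : Set (ℕ × ℕ) :=
  {p | ∃ x y : V, G.tdist x y = p}

def StronglyConnected (G : Digraph V) : Prop :=
  ∀ x y : V, ∃ n, G.HasPath x y n

/-- `P_{ĩ,j̃}(x,y)`: the set of `z` with `∂̃(x,z) = ĩ` and `∂̃(z,y) = j̃`. -/
def P (G : Digraph V) (i j : ℕ × ℕ) (x y : V) : Set V :=
  {z | G.tdist x z = i ∧ G.tdist z y = j}

open Classical in
/-- The intersection number `p^{h̃}_{ĩ,j̃}`, defined using an arbitrarily chosen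
pair at two-way distance `h̃` (and `0` if there is no such pair). -/
noncomputable def p (G : Digraph V) (h i j : ℕ × ℕ) : ℕ :=
  if hh : ∃ xy : V × V, G.tdist xy.1 xy.2 = h then
    Nat.card (G.P i j hh.choose.1 hh.choose.2)
  else 0

/-- A weakly distance-regular digraph: strongly connected, and
`|P_{ĩ,j̃}(x,y)|` depends only on `∂̃(x,y)`, `ĩ` and `j̃`. -/
def IsWDR (G : Digraph V) : Prop :=
  G.StronglyConnected ∧
    ∀ (i j : ℕ × ℕ) (x y : V), Nat.card (G.P i j x y) = G.p (G.tdist x y) i j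

/-- Commutativity: `p^{h̃}_{ĩ,j̃} = p^{h̃}_{j̃,ĩ}` for all `h̃,ĩ,j̃ ∈ ∂̃(Γ)`. -/
def IsCommutative (G : Digraph V) : Prop :=
  ∀ h i j : ℕ × ℕ, h ∈ G.tdSet → i ∈ G.tdSet → j ∈ G.tdSet → G.p h i j = G.p h j i

/-- `Γ` is an undirected graph, i.e. its arc set is symmetric. -/
def IsUndirected (G : Digraph V) : Prop :=
  ∀ x y : V, G.Adj x y → G.Adj y x

def IsSemicomplete (G : Digraph V) : Prop :=
  ∀ x y : V, x ≠ y → (G.Adj x y ∨ G.Adj y x)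

/-- `Γ` is a complete (undirected) graph. -/
def IsCompleteDigraph (G : Digraph V) : Prop :=
  ∀ x y : V, x ≠ y → (G.Adj x y ∧ G.Adj y x)

/-- The underlying graph of a digraph. -/
def underlying (G : Digraph V) : SimpleGraph V where
  Adj x y := G.Adj x y ∨ G.Adj y x
  symm := ⟨fun _ _ h => h.symm⟩
  loopless := ⟨fun x h => h.elim (G.loopless x) (G.loopless x)⟩

/-- The diameter: the maximum value of the distance function. -/
noncomputable def diameter (G : Digraph V) : ℕ :=
  sSup {n | ∃ x y : V, G.dist x y = n}

/-- The girth: the length of a shortest circuit. -/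
noncomputable def girth (G : Digraph V) : ℕ :=
  sInf {n | 0 < n ∧ ∃ x : V, G.HasPath x x n}

/-- Number of out-neighbours `d⁺(x)`. -/
noncomputable def outDeg (G : Digraph V) (x : V) : ℕ := Nat.card {y | G.Adj x y}

/-- Number of in-neighbours `d⁻(x)`. -/
noncomputable def inDeg (G : Digraph V) (x : V) : ℕ := Nat.card {y | G.Adj y x}

def IsIsomorphicTo (G : Digraph V) (G' : Digraph V') : Prop :=
  ∃ e : V ≃ V', ∀ x y : V, G.Adj x y ↔ G'.Adj (e x) (e y)

/-- The Cartesian product of two digraphs. -/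
def box (G : Digraph V) (G' : Digraph V') : Digraph (V × V') where
  Adj x y := (x.1 = y.1 ∧ G'.Adj x.2 y.2) ∨ (G.Adj x.1 y.1 ∧ x.2 = y.2)
  loopless := fun v h => h.elim (fun h' => G'.loopless v.2 h'.2) (fun h' => G.loopless v.1 h'.1)

/-- Two digraphs have the same intersection numbers. -/
def SameIntersectionNumbers (G : Digraph V) (G' : Digraph V') : Prop :=
  G.tdSet = G'.tdSet ∧
    ∀ h i j : ℕ × ℕ, h ∈ G.tdSet → i ∈ G.tdSet → j ∈ G.tdSet → G.p h i j = G'.p h i j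

/-- Induced subdigraph on a set of vertices. -/
def induce (G : Digraph V) (s : Set V) : Digraph s where
  Adj x y := G.Adj x.1 y.1
  loopless := fun v h => G.loopless v.1 h

end Digraph

/-- The Cartesian product of a family of digraphs. -/
def piBox {ι : Type*} {W : ι → Type*} (G : ∀ i, Digraph (W i)) : Digraph (∀ i, W i) where
  Adj x y := ∃ i, (G i).Adj (x i) (y i) ∧ ∀ j, j ≠ i → x j = y j
  loopless := by
    rintro v ⟨i, hi, -⟩
    exact (G i).loopless _ hi

/-- The Cayley digraph `Cay(A,S)` of an additive group (for `S ⊆ A ∖ {0}`). -/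
def Cay (A : Type*) [AddGroup A] (S : Set A) : Digraph A where
  Adj x y := x ≠ y ∧ y - x ∈ S
  loopless := fun _ h => h.1 rfl

/-- The Cayley graph of an additive group with respect to a symmetric connection set. -/
def cayleyGraph (A : Type*) [AddGroup A] (S : Set A) : SimpleGraph A where
  Adj x y := x ≠ y ∧ (y - x ∈ S ∨ x - y ∈ S)
  symm := ⟨fun _ _ h => ⟨h.1.symm, h.2.symm⟩⟩
  loopless := ⟨fun _ h => h.1 rfl⟩

/-- The Hamming graph `H(ι, S)`: vertices are tuples, adjacent iff they differ in
exactly one coordinate. -/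
def hammingGraph (ι : Type*) (S : Type*) : SimpleGraph (ι → S) where
  Adj x y := ∃ i, x i ≠ y i ∧ ∀ j, j ≠ i → x j = y j
  symm := by
    constructor
    rintro x y ⟨i, h1, h2⟩
    exact ⟨i, h1.symm, fun j hj => (h2 j hj).symm⟩
  loopless := by
    constructor
    rintro x ⟨i, h1, -⟩
    exact h1 rfl

/-- The folded `n`-cube: vertices are `(n-1)`-tuples over `ℤ₂`, adjacent iff they
differ in exactly one coordinate or in all `n-1` coordinates. -/
def foldedCube (n : ℕ) : SimpleGraph (Fin (n - 1) → ZMod 2) where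
  Adj x y := (∃ i, x i ≠ y i ∧ ∀ j, j ≠ i → x j = y j) ∨ (x ≠ y ∧ ∀ j, x j ≠ y j)
  symm := by
    constructor
    rintro x y (⟨i, h1, h2⟩ | ⟨h1, h2⟩)
    · exact Or.inl ⟨i, h1.symm, fun j hj => (h2 j hj).symm⟩
    · exact Or.inr ⟨h1.symm, fun j => (h2 j).symm⟩
  loopless := by
    constructor
    rintro x (⟨i, h1, -⟩ | ⟨h1, -⟩)
    · exact h1 rfl
    · exact h1 rfl

/-- The Cartesian product of a family of simple graphs. -/
def piBoxGraph {ι : Type*} {W : ι → Type*} (G : ∀ i, SimpleGraph (W i)) :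
    SimpleGraph (∀ i, W i) where
  Adj x y := ∃ i, (G i).Adj (x i) (y i) ∧ ∀ j, j ≠ i → x j = y j
  symm := by
    constructor
    rintro x y ⟨i, h1, h2⟩
    exact ⟨i, (G i).adj_symm h1, fun j hj => (h2 j hj).symm⟩
  loopless := by
    constructor
    rintro x ⟨i, h1, -⟩
    exact (G i).irrefl h1

/-- The Shrikhande graph `Cay(ℤ₄ × ℤ₄, {±(1,0), ±(0,1), ±(1,1)})`. -/
def shrikhande : SimpleGraph (ZMod 4 × ZMod 4) :=
  cayleyGraph (ZMod 4 × ZMod 4) {(1, 0), (-1, 0), (0, 1), (0, -1), (1, 1), (-1, -1)}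

/-- The Doob graph `G(d₁, d₂)`: the Cartesian product of `d₁` copies of the
Shrikhande graph with the Hamming graph `H(d₂, 4)`. -/
def doobGraph (d₁ d₂ : ℕ) :
    SimpleGraph ((Fin d₁ → ZMod 4 × ZMod 4) × (Fin d₂ → ZMod 4)) :=
  (piBoxGraph fun _ : Fin d₁ => shrikhande).boxProd (hammingGraph (Fin d₂) (ZMod 4))

/-- `c_i(x,y)`: the number of neighbours of `y` at distance `i - 1` from `x`. -/
noncomputable def cNum (G : SimpleGraph V) (i : ℕ) (x y : V) : ℕ :=
  Nat.card {z : V | G.Adj y z ∧ G.dist x z = i - 1}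

/-- `a_i(x,y)`: the number of neighbours of `y` at distance `i` from `x`. -/
noncomputable def aNum (G : SimpleGraph V) (i : ℕ) (x y : V) : ℕ :=
  Nat.card {z : V | G.Adj y z ∧ G.dist x z = i}

/-- `b_i(x,y)`: the number of neighbours of `y` at distance `i + 1` from `x`. -/
noncomputable def bNum (G : SimpleGraph V) (i : ℕ) (x y : V) : ℕ :=
  Nat.card {z : V | G.Adj y z ∧ G.dist x z = i + 1}

/-- A distance-regular graph. -/
def IsDRG (G : SimpleGraph V) : Prop :=
  G.Connected ∧
    ∀ (i : ℕ) (x y x' y' : V), G.dist x y = i → G.dist x' y' = i →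
      cNum G i x y = cNum G i x' y' ∧ bNum G i x y = bNum G i x' y'

/-- A distance-transitive graph. -/
def IsDistanceTransitive (G : SimpleGraph V) : Prop :=
  G.Connected ∧
    ∀ x y x' y' : V, G.dist x y = G.dist x' y' → ∃ σ : G ≃g G, σ x = x' ∧ σ y = y'

/-- The vertex set of `Γ_i(α)`: all tuples obtained from `α` by inserting an
arbitrary element of `S` in the `i`-th coordinate. -/
def lineSet {n : ℕ} {S : Type*} (i : Fin (n + 1)) (α : Fin n → S) : Set (Fin (n + 1) → S) :=
  Set.range fun b : S => i.insertNth b α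

/-- The induced subdigraph `Γ_i(α)`. -/
def Digraph.line {n : ℕ} {S : Type*} (Γ : Digraph (Fin (n + 1) → S)) (i : Fin (n + 1))
    (α : Fin n → S) : Digraph (lineSet i α) :=
  Γ.induce (lineSet i α)

/-- Pad a tuple of length `m` with the entry `o` to a tuple of length `d`. -/
def pad {S : Type*} (o : S) (d m : ℕ) (α : Fin m → S) : Fin d → S :=
  fun j => if h : j.1 < m then α ⟨j.1, h⟩ else o

/-- The digraph `Γ^{[m]}` on `S^m`: `(α,β)` is an arc iff the padded tuples form
an arc of `Γ`. -/
def Digraph.trunc {S : Type*} {d : ℕ} (Γ : Digraph (Fin d → S)) (o : S) (m : ℕ) :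
    Digraph (Fin m → S) where
  Adj α β := Γ.Adj (pad o d m α) (pad o d m β)
  loopless := fun _ h => Γ.loopless _ h

/-- The digraph `Γ^i` on `S`: `(a,b)` is an arc iff the tuples with `a` resp. `b`
in the `i`-th coordinate and `o` elsewhere form an arc of `Γ`. -/
def Digraph.coordDigraph {S : Type*} {d : ℕ} (Γ : Digraph (Fin d → S)) (o : S) (i : Fin d) :
    Digraph S where
  Adj a b := Γ.Adj (Function.update (fun _ => o) i a) (Function.update (fun _ => o) i b)
  loopless := fun _ h => Γ.loopless _ h

/-- The set `T = S^{m-1} × {(o,…,o)}` (as a subset of `S^{d-1}`, here `d = n+1`). -/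
def Tset {n : ℕ} (S : Type*) (o : S) (m : ℕ) : Set (Fin n → S) :=
  {α | ∀ j : Fin n, m - 1 ≤ j.1 → α j = o}

end Paper

/-!
Weak distance-regularity makes the out-degree constant: the out-neighbours of `x` are the `v`
with `∂̃(x,v) = (1,q)`, and there are `p^{(0,0)}_{(1,q),(q,1)}` of them for each `q`.
In a semicomplete digraph, if `∂(z,x) ≥ 3` then every out-neighbour `u` of `z` has
`∂(u,x) ≥ 2`, so `x → u`; together with `x → z` this gives `d⁺(x) > d⁺(z)`. Hence all
distances are at most `2`, distinct vertices have two-way distance `(1,1)`, `(1,2)` or `(2,1)`,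
and an arc `a → b` without reverse arc has `∂̃(a,b) = (1,2)`, which yields the diameter and a
circuit `a → b → · → a` of length `3`.
-/

namespace Paper.Digraph

variable {V : Type*} {G : Digraph V}

theorem hasPath_zero (G : Digraph V) (x : V) : G.HasPath x x 0 :=
  ⟨fun _ => x, rfl, rfl, fun _ h => absurd h (Nat.not_lt_zero _)⟩

theorem HasPath.cons {x y z : V} {n : ℕ} (hxy : G.Adj x y) (h : G.HasPath y z n) :
    G.HasPath x z (n + 1) := by
  obtain ⟨f, hf0, hfn, hf⟩ := h
  refine ⟨fun k => if k = 0 then x else f (k - 1), rfl, by simpa using hfn, fun k hk => ?_⟩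
  rcases k with _ | k
  · simpa [hf0] using hxy
  · simpa using hf k (by omega)

theorem dist_le {x y : V} {n : ℕ} (h : G.HasPath x y n) : G.dist x y ≤ n :=
  Nat.sInf_le h

@[simp]
theorem dist_self (G : Digraph V) (x : V) : G.dist x x = 0 :=
  Nat.le_zero.1 (dist_le (G.hasPath_zero x))

@[simp]
theorem tdist_self (G : Digraph V) (x : V) : G.tdist x x = (0, 0) := by
  simp [tdist]

theorem dist_le_one_of_adj {x y : V} (h : G.Adj x y) : G.dist x y ≤ 1 :=
  dist_le ((G.hasPath_zero y).cons h)

section StronglyConnected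

variable (hG : G.StronglyConnected)
include hG

theorem StronglyConnected.hasPath_dist (x y : V) : G.HasPath x y (G.dist x y) :=
  Nat.sInf_mem (hG x y)

theorem StronglyConnected.dist_le_succ_of_adj {x y : V} (hxy : G.Adj x y) (z : V) :
    G.dist x z ≤ G.dist y z + 1 :=
  dist_le ((hG.hasPath_dist y z).cons hxy)

theorem StronglyConnected.dist_eq_zero_iff {x y : V} : G.dist x y = 0 ↔ x = y := by
  refine ⟨fun h => ?_, fun h => h ▸ G.dist_self x⟩
  obtain ⟨f, hf0, hfn, -⟩ := hG.hasPath_dist x y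
  rw [h] at hfn
  rw [← hf0, hfn]

theorem StronglyConnected.dist_eq_one_iff {x y : V} : G.dist x y = 1 ↔ G.Adj x y := by
  refine ⟨fun h => ?_, fun h => ?_⟩
  · obtain ⟨f, hf0, hf1, hf⟩ := hG.hasPath_dist x y
    rw [h] at hf1
    simpa [hf0, hf1] using hf 0 (by omega)
  · have hxy : x ≠ y := fun hxy => G.loopless x (hxy ▸ h)
    have := mt hG.dist_eq_zero_iff.1 hxy
    have := dist_le_one_of_adj h
    omega

end StronglyConnected

theorem IsWDR.card_tdist_eq (hG : G.IsWDR) (x : V) (i : ℕ × ℕ) :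
    Nat.card {v | G.tdist x v = i} = G.p (0, 0) i i.swap := by
  have hfiber : {v | G.tdist x v = i} = G.P i i.swap x x := by
    ext v
    simp only [P, Set.mem_ofPred_eq, iff_self_and]
    rintro rfl
    rfl
  rw [hfiber, hG.2, tdist_self]

theorem IsWDR.card_tdist_mem_eq [Finite V] (hG : G.IsWDR) (T : Set (ℕ × ℕ)) (x y : V) :
    Nat.card {v | G.tdist x v ∈ T} = Nat.card {v | G.tdist y v ∈ T} := by
  classical
  cases nonempty_fintype V
  let D : Finset (ℕ × ℕ) := (Finset.univ : Finset (V × V)).image fun q => G.tdist q.1 q.2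
  suffices h : ∀ x, Nat.card {v | G.tdist x v ∈ T} = ∑ i ∈ D with i ∈ T, G.p (0, 0) i i.swap by
    rw [h, h]
  intro x
  rw [Nat.card_eq_card_toFinset, Finset.card_eq_sum_card_fiberwise (f := G.tdist x)
    (t := D.filter (· ∈ T))]
  · refine Finset.sum_congr rfl fun i hi => ?_
    rw [← hG.card_tdist_eq x i, Nat.card_eq_card_toFinset]
    congr 1
    ext v
    simp only [Set.mem_toFinset, Set.mem_ofPred_eq, Finset.mem_filter, and_iff_right_iff_imp]
    rintro rfl
    exact (Finset.mem_filter.1 hi).2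
  · intro v hv
    simp only [Finset.coe_filter, Set.coe_toFinset, Set.mem_ofPred_eq] at hv ⊢
    exact ⟨Finset.mem_image.2 ⟨(x, v), Finset.mem_univ _, rfl⟩, hv⟩

theorem IsWDR.outDeg_eq [Finite V] (hG : G.IsWDR) (x y : V) : G.outDeg x = G.outDeg y := by
  have hout : ∀ x, {v | G.Adj x v} = {v | G.tdist x v ∈ {i : ℕ × ℕ | i.1 = 1}} := fun x => by
    ext v
    exact hG.1.dist_eq_one_iff.symm
  simp only [outDeg, hout, hG.card_tdist_mem_eq _ x y]

theorem IsSemicomplete.dist_le_two [Finite V] (hsc : G.IsSemicomplete) (hG : G.IsWDR)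
    (z x : V) : G.dist z x ≤ 2 := by
  by_contra! hzx
  have adj_of_two_le : ∀ u, 2 ≤ G.dist u x → G.Adj x u := fun u hu => by
    have hux : u ≠ x := fun h => by simp [h] at hu
    refine (hsc x u hux.symm).resolve_right fun hadj => ?_
    have := hG.1.dist_eq_one_iff.2 hadj
    omega
  have hsub : insert z {u | G.Adj z u} ⊆ {u | G.Adj x u} := by
    refine Set.insert_subset (adj_of_two_le z (by omega)) fun u hzu => adj_of_two_le u ?_
    have := hG.1.dist_le_succ_of_adj hzu x
    omega
  have hcard := Set.ncard_le_ncard hsub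
  rw [Set.ncard_insert_of_notMem (s := {u | G.Adj z u}) (G.loopless z)] at hcard
  have := hG.outDeg_eq x z
  simp only [outDeg, Nat.card_coe_set_eq] at this
  omega

theorem IsSemicomplete.tdist_mem_of_ne [Finite V] (hsc : G.IsSemicomplete) (hG : G.IsWDR)
    {x y : V} (hxy : x ≠ y) : G.tdist x y ∈ ({(1, 1), (1, 2), (2, 1)} : Set (ℕ × ℕ)) := by
  have h₁ := hsc.dist_le_two hG x y
  have h₂ := hsc.dist_le_two hG y x
  have h₃ := mt hG.1.dist_eq_zero_iff.1 hxy
  have h₄ := mt hG.1.dist_eq_zero_iff.1 hxy.symm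
  have h₅ : G.dist x y = 1 ∨ G.dist y x = 1 :=
    (hsc x y hxy).imp hG.1.dist_eq_one_iff.2 hG.1.dist_eq_one_iff.2
  simp only [tdist, Set.mem_insert_iff, Set.mem_singleton_iff, Prod.ext_iff]
  omega

theorem IsSemicomplete.tdSet_subset [Finite V] (hsc : G.IsSemicomplete) (hG : G.IsWDR) :
    G.tdSet ⊆ {(0, 0), (1, 1), (1, 2), (2, 1)} := by
  rintro p ⟨x, y, rfl⟩
  by_cases hxy : x = y
  · simp [hxy]
  · exact Set.mem_insert_of_mem _ (hsc.tdist_mem_of_ne hG hxy)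

theorem IsSemicomplete.exists_tdist_eq_one_two [Finite V] (hsc : G.IsSemicomplete)
    (hG : G.IsWDR) (hnund : ¬ G.IsUndirected) : ∃ a b, G.tdist a b = (1, 2) := by
  obtain ⟨a, b, hab, hba⟩ : ∃ a b, G.Adj a b ∧ ¬ G.Adj b a := by
    simpa [IsUndirected] using hnund
  have hmem := hsc.tdist_mem_of_ne hG (x := a) (y := b) fun h => G.loopless a (h ▸ hab)
  have h₁ := hG.1.dist_eq_one_iff.2 hab
  have h₂ := hG.1.dist_eq_one_iff.not.2 hba
  refine ⟨a, b, ?_⟩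
  simp only [tdist, Set.mem_insert_iff, Set.mem_singleton_iff, Prod.ext_iff] at hmem ⊢
  omega

theorem IsSemicomplete.tdSet_eq [Finite V] (hsc : G.IsSemicomplete) (hG : G.IsWDR) {a b : V}
    (hab : G.tdist a b = (1, 2)) :
    G.tdSet = {(0, 0), (1, 2), (2, 1)} ∨ G.tdSet = {(0, 0), (1, 1), (1, 2), (2, 1)} := by
  have hlower : {(0, 0), (1, 2), (2, 1)} ⊆ G.tdSet := by
    rintro p (rfl | rfl | rfl)
    · exact ⟨a, a, G.tdist_self a⟩
    · exact ⟨a, b, hab⟩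
    · exact ⟨b, a, by simpa [tdist, Prod.ext_iff, and_comm] using hab⟩
  by_cases h11 : (1, 1) ∈ G.tdSet
  · refine Or.inr ((hsc.tdSet_subset hG).antisymm ?_)
    rw [Set.insert_comm]
    exact Set.insert_subset h11 hlower
  · refine Or.inl (Set.Subset.antisymm (fun p hp => ?_) hlower)
    rcases hsc.tdSet_subset hG hp with rfl | rfl | rfl | rfl
    · simp
    · exact absurd hp h11
    · simp
    · simp

end Paper.Digraph

open Paper in
theorem prop_semicomplete_general {V : Type*} [Finite V] (Γ : Paper.Digraph V)
    (hsc : Γ.IsSemicomplete) (hwdr : Γ.IsWDR) (hnund : ¬ Γ.IsUndirected) :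
    Γ.diameter = 2 ∧ Γ.girth ≤ 3 ∧
      (Γ.tdSet = {((0 : ℕ), (0 : ℕ)), (1, 2), (2, 1)} ∨
        Γ.tdSet = {((0 : ℕ), (0 : ℕ)), (1, 1), (1, 2), (2, 1)}) := by
  obtain ⟨a, b, hab⟩ := hsc.exists_tdist_eq_one_two hwdr hnund
  have hdist : Γ.dist a b = 1 ∧ Γ.dist b a = 2 := Prod.ext_iff.1 hab
  refine ⟨?_, ?_, hsc.tdSet_eq hwdr hab⟩
  · refine IsGreatest.csSup_eq ⟨⟨b, a, hdist.2⟩, ?_⟩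
    rintro n ⟨x, y, rfl⟩
    exact hsc.dist_le_two hwdr x y
  · have hcycle := (hdist.2 ▸ hwdr.1.hasPath_dist b a).cons (hwdr.1.dist_eq_one_iff.1 hdist.1)
    exact Nat.sInf_le ⟨by norm_num, a, hcycle⟩

open Paper in
/-- **Proposition 3.5.** A semicomplete weakly distance-regular digraph that is
not an undirected graph has diameter `2`, girth `≤ 3`, and its two-way distance
set is `{(0,0),(1,2),(2,1)}` or `{(0,0),(1,1),(1,2),(2,1)}`. -/
theorem prop_semicomplete {V : Type*} [Finite V] [Nonempty V] (Γ : Paper.Digraph V)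
    (hsc : Γ.IsSemicomplete) (hwdr : Γ.IsWDR) (hnund : ¬ Γ.IsUndirected) :
    Γ.diameter = 2 ∧ Γ.girth ≤ 3 ∧
      (Γ.tdSet = {((0 : ℕ), (0 : ℕ)), (1, 2), (2, 1)} ∨
        Γ.tdSet = {((0 : ℕ), (0 : ℕ)), (1, 1), (1, 2), (2, 1)}) :=
  prop_semicomplete_general Γ hsc hwdr hnund
end

section
/- Let 1≤i≤m, α∈T and x,y∈V(Γᵢ(α)) with (x,y)∈Γ_{1,p−1} for some p≥2. Then exactly one of the following holds: (i) d⁺_{Γᵢ(α)}(x)=d⁺_{Γᵢ(α)}(y), d⁻_{Γᵢ(α)}(x)=d⁻_{Γᵢ(α)}(y), and either p=2 or p^{(1,p−1)}_{(2,2),(s−1,1)}=0 for all (1,s−1)∈∂̃(Γ); (ii) d⁺_{Γᵢ(α)}(x)>d⁺_{Γᵢ(α)}(y), d⁻_{Γᵢ(α)}(x)<d⁻_{Γᵢ(α)}(y), p≠2, and p^{(1,p−1)}_{(2,2),(s−1,1)}≠0 for some (1,s−1)∈∂̃(Γ). -/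
/-!
Write `X` for the set of `z` with a one-way arc `z → x` that are non-adjacent to `y`, and `Y` for
the set of `z` non-adjacent to `x` with a one-way arc `z → y`. Since `a₁ = q - 2`, a vertex adjacent
to two vertices of the line `L = Γᵢ(α)` lies on `L`; so the neighbours of `x` off `L` are exactly
its neighbours non-adjacent to `y`, and vice versa. Counting these with intersection numbers,
exchanging the two legs by commutativity, and using that `Γ` has constant in- and out-degree gives
`d⁺(x) + |Y| = d⁺(y) + |X|` and `d⁻(x) + |X| = d⁻(y) + |Y|`.

If `p = 2` the pair `(x, y)` is symmetric and `|X| = |Y|`. Otherwise exchanging legs turns `z ∈ Y`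
into a `t ∈ X` with a one-way arc `t → z`, and `c₂ = 2` makes `z ↦ t` injective. A vertex
witnessing `p^{(1,p-1)}_{(2,2),(s-1,1)} ≠ 0` produces a vertex of `X` outside its image. If there is
no such witness, no `z ∈ X` has `∂(y, z) = 2`, and the second common neighbour of `y` and `z` gives
an injection `X → Y`.
-/

lemma Set.ncard_le_ncard_of_forall_subsingleton {α β : Type*} {s : Set α} {t : Set β}
    (r : α → β → Prop) (hs : ∀ a ∈ s, ∃ b ∈ t, r a b)
    (ht : ∀ b ∈ t, {a | a ∈ s ∧ r a b}.Subsingleton) (htf : t.Finite := by toFinite_tac) :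
    s.ncard ≤ t.ncard := by
  rcases s.eq_empty_or_nonempty with rfl | ⟨a₀, ha₀⟩
  · simp
  have : Nonempty β := ⟨(hs a₀ ha₀).choose⟩
  choose! f hft hfr using hs
  exact Set.ncard_le_ncard_of_injOn f hft
    (fun a ha a' ha' h => ht _ (hft a ha) ⟨ha, hfr a ha⟩ ⟨ha', h ▸ hfr a' ha'⟩) htf

namespace SimpleGraph

variable {V : Type*} {G : SimpleGraph V} {L : Set V} {a b c t u v z : V}

lemma ncard_commonNeighbors_eq_two (hc2 : ∀ u v, G.dist u v = 2 → Paper.cNum G 2 u v = 2)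
    (huv : u ≠ v) (hadj : ¬ G.Adj u v) (hw : (G.commonNeighbors u v).Nonempty) :
    (G.commonNeighbors u v).ncard = 2 := by
  have hdist : G.dist u v = 2 := by
    rw [dist, edist_eq_two_iff.2 ⟨huv, hadj, hw⟩]
    rfl
  rw [← hc2 u v hdist, Paper.cNum, Nat.card_coe_set_eq]
  congr 1
  ext z
  simp [mem_commonNeighbors, dist_eq_one_iff_adj, and_comm]

lemma eq_of_mem_commonNeighbors (hc2 : ∀ u v, G.dist u v = 2 → Paper.cNum G 2 u v = 2)
    (huv : u ≠ v) (hadj : ¬ G.Adj u v) (ha : a ∈ G.commonNeighbors u v)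
    (hb : b ∈ G.commonNeighbors u v) (hc : c ∈ G.commonNeighbors u v) (hba : b ≠ a)
    (hca : c ≠ a) : b = c := by
  have hcard := ncard_commonNeighbors_eq_two hc2 huv hadj ⟨a, ha⟩
  have hone : (G.commonNeighbors u v \ {a}).ncard ≤ 1 := by
    rw [Set.ncard_sdiff_singleton_of_mem ha, hcard]
  exact (Set.ncard_le_one (Set.finite_of_ncard_pos (by omega)).sdiff).1 hone b ⟨hb, hba⟩ c
    ⟨hc, hca⟩

lemma exists_ne_mem_commonNeighbors (hc2 : ∀ u v, G.dist u v = 2 → Paper.cNum G 2 u v = 2)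
    (huv : u ≠ v) (hadj : ¬ G.Adj u v) (ha : a ∈ G.commonNeighbors u v) :
    ∃ b ∈ G.commonNeighbors u v, b ≠ a :=
  Set.exists_ne_of_one_lt_ncard (by rw [ncard_commonNeighbors_eq_two hc2 huv hadj ⟨a, ha⟩]; omega) a

def IsCommonNeighborClosed (G : SimpleGraph V) (L : Set V) : Prop :=
  ∀ ⦃u⦄, u ∈ L → ∀ ⦃v⦄, v ∈ L → u ≠ v → G.commonNeighbors u v ⊆ L

/-- The `|L| - 2` common neighbours of `u, v ∈ L` inside `L` already exhaust `a₁`. -/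
lemma IsClique.isCommonNeighborClosed [Finite V] (hL : G.IsClique L)
    (ha1 : ∀ u v, G.dist u v = 1 → Paper.aNum G 1 u v = L.ncard - 2) :
    G.IsCommonNeighborClosed L := by
  intro u hu v hv huv
  have hsub : L \ {u, v} ⊆ G.commonNeighbors u v := by
    rintro w ⟨hw, hwuv⟩
    simp only [Set.mem_insert_iff, Set.mem_singleton_iff, not_or] at hwuv
    exact ⟨hL hu hw (Ne.symm hwuv.1), hL hv hw (Ne.symm hwuv.2)⟩
  have hcard : (G.commonNeighbors u v).ncard = (L \ {u, v}).ncard := by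
    rw [Set.ncard_sdiff (Set.insert_subset hu (Set.singleton_subset_iff.2 hv)),
      Set.ncard_pair huv, ← ha1 u v (dist_eq_one_iff_adj.2 (hL hu hv huv)), Paper.aNum,
      Nat.card_coe_set_eq]
    congr 1
    ext z
    simp [mem_commonNeighbors, dist_eq_one_iff_adj, and_comm]
  rw [← Set.eq_of_subset_of_ncard_le hsub hcard.le]
  exact Set.sdiff_subset

lemma IsCommonNeighborClosed.notMem_iff (hcl : G.IsCommonNeighborClosed L) (hL : G.IsClique L)
    (hu : u ∈ L) (hv : v ∈ L) (huv : u ≠ v) (hz : G.Adj u z) : z ∉ L ↔ z ≠ v ∧ ¬ G.Adj v z := by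
  constructor
  · intro hzL
    exact ⟨fun h => hzL (h ▸ hv), fun h => hzL (hcl hu hv huv ⟨hz, h⟩)⟩
  · rintro ⟨hzv, hvz⟩ hzL
    exact hvz (hL hv hzL (Ne.symm hzv))

lemma IsCommonNeighborClosed.adj_of_mem_commonNeighbors (hcl : G.IsCommonNeighborClosed L)
    (hL : G.IsClique L) (ha : a ∈ L) (hb : b ∈ L) (hab : a ≠ b)
    (ht : t ∈ G.commonNeighbors a b) (htb : t ≠ b) (hz : z ∈ G.commonNeighbors t b)
    (hza : z ≠ a) : G.Adj a z :=
  hL ha (hcl (hcl ha hb hab ht) hb htb hz) (Ne.symm hza)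

end SimpleGraph

namespace Paper

namespace Digraph

open SimpleGraph

variable {V : Type*} {G : Digraph V} {L : Set V} {U U' W W' : Set (ℕ × ℕ)}
  {r t u v w x y z z₁ z₂ : V}

lemma hasPath_zero_s11 : G.HasPath u v 0 ↔ u = v := by
  constructor
  · rintro ⟨f, rfl, rfl, -⟩
    rfl
  · rintro rfl
    exact ⟨fun _ => u, rfl, rfl, by omega⟩

lemma hasPath_one : G.HasPath u v 1 ↔ G.Adj u v := by
  constructor
  · rintro ⟨f, rfl, rfl, h⟩
    exact h 0 one_pos
  · intro h
    refine ⟨fun k => if k = 0 then u else v, rfl, rfl, fun k hk => ?_⟩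
    obtain rfl : k = 0 := by omega
    simpa using h

lemma dist_self_s11 (u : V) : G.dist u u = 0 :=
  Nat.sInf_eq_zero.2 (Or.inl (hasPath_zero_s11.2 rfl))

lemma dist_le_two (huw : G.Adj u w) (hwv : G.Adj w v) : G.dist u v ≤ 2 := by
  refine Nat.sInf_le ⟨fun k => if k = 0 then u else if k = 1 then w else v, rfl, rfl, ?_⟩
  intro k hk
  interval_cases k <;> simpa

lemma hasPath_dist (hsc : G.StronglyConnected) (u v : V) : G.HasPath u v (G.dist u v) :=
  Nat.sInf_mem (hsc u v)

lemma dist_eq_zero_iff (hsc : G.StronglyConnected) : G.dist u v = 0 ↔ u = v := by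
  refine ⟨fun h => hasPath_zero_s11.1 (h ▸ hasPath_dist hsc u v), ?_⟩
  rintro rfl
  exact dist_self_s11 u

lemma dist_eq_one_iff (hsc : G.StronglyConnected) : G.dist u v = 1 ↔ G.Adj u v := by
  refine ⟨fun h => hasPath_one.1 (h ▸ hasPath_dist hsc u v), fun h => ?_⟩
  have hle : G.dist u v ≤ 1 := Nat.sInf_le (hasPath_one.2 h)
  have hne : G.dist u v ≠ 0 := fun h0 => G.loopless u ((dist_eq_zero_iff hsc).1 h0 ▸ h)
  omega

lemma two_le_dist_iff (hsc : G.StronglyConnected) : 2 ≤ G.dist u v ↔ u ≠ v ∧ ¬ G.Adj u v := by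
  rw [ne_eq, ← dist_eq_zero_iff hsc, ← dist_eq_one_iff hsc]
  omega

lemma exists_adj_adj_of_dist_eq_two (hsc : G.StronglyConnected) (h : G.dist u v = 2) :
    ∃ w, G.Adj u w ∧ G.Adj w v := by
  obtain ⟨f, hf0, hf2, hf⟩ := h ▸ hasPath_dist hsc u v
  exact ⟨f 1, hf0 ▸ hf 0 (by omega), hf2 ▸ hf 1 (by omega)⟩

lemma ne_of_adj (h : G.Adj u v) : u ≠ v := by
  rintro rfl
  exact G.loopless u h

lemma underlying_adj_iff : G.underlying.Adj u v ↔ G.Adj u v ∨ G.Adj v u := Iff.rfl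

def oneWayOut : Set (ℕ × ℕ) := {w | w.1 = 1 ∧ 2 ≤ w.2}

def oneWayIn : Set (ℕ × ℕ) := {w | 2 ≤ w.1 ∧ w.2 = 1}

def apart : Set (ℕ × ℕ) := {w | 2 ≤ w.1 ∧ 2 ≤ w.2}

lemma tdist_eq_one_one_iff (hsc : G.StronglyConnected) :
    G.tdist u v = (1, 1) ↔ G.Adj u v ∧ G.Adj v u := by
  simp [tdist, Prod.ext_iff, dist_eq_one_iff hsc]

lemma tdist_mem_oneWayOut_iff (hsc : G.StronglyConnected) :
    G.tdist u v ∈ oneWayOut ↔ G.Adj u v ∧ ¬ G.Adj v u := by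
  simp only [oneWayOut, tdist, Set.mem_ofPred_eq, dist_eq_one_iff hsc, two_le_dist_iff hsc]
  exact ⟨fun h => ⟨h.1, h.2.2⟩, fun h => ⟨h.1, (ne_of_adj h.1).symm, h.2⟩⟩

lemma tdist_mem_oneWayIn_iff (hsc : G.StronglyConnected) :
    G.tdist u v ∈ oneWayIn ↔ ¬ G.Adj u v ∧ G.Adj v u := by
  simp only [oneWayIn, tdist, Set.mem_ofPred_eq, dist_eq_one_iff hsc, two_le_dist_iff hsc]
  exact ⟨fun h => ⟨h.1.2, h.2⟩, fun h => ⟨⟨(ne_of_adj h.2).symm, h.1⟩, h.2⟩⟩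

lemma tdist_mem_apart_iff (hsc : G.StronglyConnected) :
    G.tdist u v ∈ apart ↔ u ≠ v ∧ ¬ G.underlying.Adj u v := by
  simp only [apart, tdist, Set.mem_ofPred_eq, two_le_dist_iff hsc, underlying_adj_iff]
  grind

def PSet (G : Digraph V) (U W : Set (ℕ × ℕ)) (x y : V) : Set V :=
  {z | G.tdist x z ∈ U ∧ G.tdist z y ∈ W}

lemma tdSet_finite [Finite V] (G : Digraph V) : G.tdSet.Finite :=
  (Set.finite_range fun xy : V × V => G.tdist xy.1 xy.2).subset
    (by rintro _ ⟨x, y, rfl⟩; exact ⟨(x, y), rfl⟩)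

lemma ncard_P [Finite V] (hwdr : G.IsWDR) (i j : ℕ × ℕ) (x y : V) :
    (G.P i j x y).ncard = G.p (G.tdist x y) i j := by
  rw [← Nat.card_coe_set_eq]
  exact hwdr.2 i j x y

lemma exists_of_p_tdist_ne_zero [Finite V] (hwdr : G.IsWDR) {i j : ℕ × ℕ}
    (h : G.p (G.tdist x y) i j ≠ 0) : ∃ z, G.tdist x z = i ∧ G.tdist z y = j := by
  rw [← ncard_P hwdr] at h
  exact Set.nonempty_of_ncard_ne_zero h

lemma p_tdist_ne_zero [Finite V] (hwdr : G.IsWDR) {i j : ℕ × ℕ} (hi : G.tdist x z = i)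
    (hj : G.tdist z y = j) : G.p (G.tdist x y) i j ≠ 0 := by
  rw [← ncard_P hwdr]
  exact ((Set.ncard_pos (Set.toFinite (G.P i j x y))).2 ⟨z, hi, hj⟩).ne'

lemma p_tdist_ne_zero_swap [Finite V] (hwdr : G.IsWDR) (hcomm : G.IsCommutative)
    {i j : ℕ × ℕ} (hi : G.tdist x z = i) (hj : G.tdist z y = j) :
    G.p (G.tdist x y) j i ≠ 0 := by
  rw [← hcomm _ _ _ ⟨x, y, rfl⟩ ⟨x, z, hi⟩ ⟨z, y, hj⟩]
  exact p_tdist_ne_zero hwdr hi hj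

lemma exists_tdist_swap [Finite V] (hwdr : G.IsWDR) (hcomm : G.IsCommutative) {i j : ℕ × ℕ}
    (hi : G.tdist x z = i) (hj : G.tdist z y = j) : ∃ t, G.tdist x t = j ∧ G.tdist t y = i :=
  exists_of_p_tdist_ne_zero hwdr (p_tdist_ne_zero_swap hwdr hcomm hi hj)

lemma ncard_PSet_eq_sum [Finite V] (hwdr : G.IsWDR) (U W : Set (ℕ × ℕ)) (x y : V) :
    (G.PSet U W x y).ncard =
      ∑ b ∈ G.tdSet_finite.toFinset ×ˢ G.tdSet_finite.toFinset,
        (U ×ˢ W).indicator (fun b => G.p (G.tdist x y) b.1 b.2) b := by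
  classical
  have := Fintype.ofFinite V
  rw [Set.ncard_eq_toFinset_card', Finset.card_eq_sum_card_fiberwise
    (t := G.tdSet_finite.toFinset ×ˢ G.tdSet_finite.toFinset)
    (f := fun z => (G.tdist x z, G.tdist z y)) (fun z _ => by simpa using ⟨⟨x, z, rfl⟩, z, y, rfl⟩)]
  refine Finset.sum_congr rfl fun b _ => ?_
  by_cases hb : b ∈ U ×ˢ W
  · rw [Set.indicator_of_mem hb, ← ncard_P hwdr, Set.ncard_eq_toFinset_card']
    congr 1
    ext z
    simp only [Finset.mem_filter, PSet, P, Prod.ext_iff]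
    grind
  · rw [Set.indicator_of_notMem hb, Finset.card_eq_zero, Finset.filter_eq_empty_iff]
    rintro z hz rfl
    exact hb (Set.mem_toFinset.1 hz : z ∈ G.PSet U W x y)

lemma ncard_PSet_eq_of_tdist_eq [Finite V] (hwdr : G.IsWDR) (U W : Set (ℕ × ℕ)) {x y x' y' : V}
    (h : G.tdist x y = G.tdist x' y') :
    (G.PSet U W x y).ncard = (G.PSet U W x' y').ncard := by
  rw [ncard_PSet_eq_sum hwdr, ncard_PSet_eq_sum hwdr, h]

lemma ncard_PSet_comm [Finite V] (hwdr : G.IsWDR) (hcomm : G.IsCommutative)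
    (U W : Set (ℕ × ℕ)) (x y : V) : (G.PSet U W x y).ncard = (G.PSet W U x y).ncard := by
  rw [ncard_PSet_eq_sum hwdr, ncard_PSet_eq_sum hwdr]
  refine Finset.sum_nbij' Prod.swap Prod.swap (by simp +contextual) (by simp +contextual)
    (by simp) (by simp) fun b hb => ?_
  simp only [Finset.mem_product, Set.Finite.mem_toFinset] at hb
  have hswap : b.swap ∈ W ×ˢ U ↔ b ∈ U ×ˢ W := and_comm
  by_cases hbUW : b ∈ U ×ˢ W
  · rw [Set.indicator_of_mem hbUW, Set.indicator_of_mem (hswap.2 hbUW)]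
    exact hcomm _ _ _ ⟨x, y, rfl⟩ hb.1 hb.2
  · rw [Set.indicator_of_notMem hbUW, Set.indicator_of_notMem (mt hswap.1 hbUW)]

lemma outDeg_eq_outDeg [Finite V] (hwdr : G.IsWDR) (x y : V) : G.outDeg x = G.outDeg y := by
  have hout : ∀ u, {z | G.Adj u z} = G.PSet {w | w.1 = 1} Set.univ u u := fun u => by
    ext z
    simp [PSet, tdist, dist_eq_one_iff hwdr.1]
  rw [outDeg, outDeg, Nat.card_coe_set_eq, Nat.card_coe_set_eq, hout, hout]
  exact ncard_PSet_eq_of_tdist_eq hwdr _ _ (by simp [tdist, dist_self_s11])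

lemma inDeg_eq_inDeg [Finite V] (hwdr : G.IsWDR) (x y : V) : G.inDeg x = G.inDeg y := by
  have hin : ∀ u, {z | G.Adj z u} = G.PSet {w | w.2 = 1} Set.univ u u := fun u => by
    ext z
    simp [PSet, tdist, dist_eq_one_iff hwdr.1]
  rw [inDeg, inDeg, Nat.card_coe_set_eq, Nat.card_coe_set_eq, hin, hin]
  exact ncard_PSet_eq_of_tdist_eq hwdr _ _ (by simp [tdist, dist_self_s11])

lemma ncard_PSet_union_left [Finite V] (h : Disjoint U U') :
    (G.PSet (U ∪ U') W x y).ncard = (G.PSet U W x y).ncard + (G.PSet U' W x y).ncard := by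
  have hunion : G.PSet (U ∪ U') W x y = G.PSet U W x y ∪ G.PSet U' W x y := by
    ext z
    simp [PSet, or_and_right]
  rw [hunion]
  exact Set.ncard_union_eq (Set.disjoint_left.2 fun z h1 h2 => Set.disjoint_left.1 h h1.1 h2.1)

lemma ncard_PSet_union_right [Finite V] (h : Disjoint W W') :
    (G.PSet U (W ∪ W') x y).ncard = (G.PSet U W x y).ncard + (G.PSet U W' x y).ncard := by
  have hunion : G.PSet U (W ∪ W') x y = G.PSet U W x y ∪ G.PSet U W' x y := by
    ext z
    simp [PSet, and_or_left]
  rw [hunion]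
  exact Set.ncard_union_eq (Set.disjoint_left.2 fun z h1 h2 => Set.disjoint_left.1 h h1.2 h2.2)

lemma disjoint_oneWayOut : Disjoint {(1, 1)} oneWayOut :=
  Set.disjoint_singleton_left.2 (by simp [oneWayOut])

lemma disjoint_oneWayIn : Disjoint {(1, 1)} oneWayIn :=
  Set.disjoint_singleton_left.2 (by simp [oneWayIn])

lemma adj_iff_tdist_mem (hsc : G.StronglyConnected) :
    G.Adj x y ↔ G.tdist x y ∈ {(1, 1)} ∪ oneWayOut := by
  rw [Set.mem_union, Set.mem_singleton_iff, tdist_eq_one_one_iff hsc,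
    tdist_mem_oneWayOut_iff hsc]
  tauto

lemma adj_iff_tdist_mem' (hsc : G.StronglyConnected) :
    G.Adj y x ↔ G.tdist x y ∈ {(1, 1)} ∪ oneWayIn := by
  rw [Set.mem_union, Set.mem_singleton_iff, tdist_eq_one_one_iff hsc,
    tdist_mem_oneWayIn_iff hsc]
  tauto

lemma outDeg_induce (hu : u ∈ L) : (G.induce L).outDeg ⟨u, hu⟩ = ({z | G.Adj u z} ∩ L).ncard := by
  rw [← Nat.card_coe_set_eq]
  exact Nat.card_congr ⟨fun z => ⟨z.1.1, z.2, z.1.2⟩, fun z => ⟨⟨z.1, z.2.2⟩, z.2.1⟩,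
    fun _ => rfl, fun _ => rfl⟩

lemma inDeg_induce (hu : u ∈ L) : (G.induce L).inDeg ⟨u, hu⟩ = ({z | G.Adj z u} ∩ L).ncard := by
  rw [← Nat.card_coe_set_eq]
  exact Nat.card_congr ⟨fun z => ⟨z.1.1, z.2, z.1.2⟩, fun z => ⟨⟨z.1, z.2.2⟩, z.2.1⟩,
    fun _ => rfl, fun _ => rfl⟩

lemma notMem_iff_tdist_mem_apart_left (hsc : G.StronglyConnected)
    (hL : G.underlying.IsClique L) (hcl : G.underlying.IsCommonNeighborClosed L) (hx : x ∈ L)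
    (hy : y ∈ L) (hxy : x ≠ y) (hz : G.underlying.Adj x z) : z ∉ L ↔ G.tdist z y ∈ apart := by
  rw [hcl.notMem_iff hL hx hy hxy hz, tdist_mem_apart_iff hsc, G.underlying.adj_comm]

lemma notMem_iff_tdist_mem_apart_right (hsc : G.StronglyConnected)
    (hL : G.underlying.IsClique L) (hcl : G.underlying.IsCommonNeighborClosed L) (hx : x ∈ L)
    (hy : y ∈ L) (hxy : x ≠ y) (hz : G.underlying.Adj y z) : z ∉ L ↔ G.tdist x z ∈ apart := by
  rw [hcl.notMem_iff hL hy hx hxy.symm hz, tdist_mem_apart_iff hsc, ne_comm]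

lemma outDeg_induce_add_ncard [Finite V] (hwdr : G.IsWDR) (hcomm : G.IsCommutative)
    (hL : G.underlying.IsClique L) (hcl : G.underlying.IsCommonNeighborClosed L) (hx : x ∈ L)
    (hy : y ∈ L) (hxy : x ≠ y) :
    (G.induce L).outDeg ⟨x, hx⟩ + (G.PSet apart oneWayOut x y).ncard =
      (G.induce L).outDeg ⟨y, hy⟩ + (G.PSet oneWayIn apart x y).ncard := by
  have hsc := hwdr.1
  have hx_off : {z | G.Adj x z} \ L = G.PSet ({(1, 1)} ∪ oneWayOut) apart x y := by
    ext z
    simp only [Set.mem_sdiff, Set.mem_ofPred_eq, PSet, ← adj_iff_tdist_mem hsc]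
    exact and_congr_right fun h =>
      notMem_iff_tdist_mem_apart_left hsc hL hcl hx hy hxy (Or.inl h)
  have hy_off : {z | G.Adj y z} \ L = G.PSet apart ({(1, 1)} ∪ oneWayIn) x y := by
    ext z
    simp only [Set.mem_sdiff, Set.mem_ofPred_eq, PSet, ← adj_iff_tdist_mem' hsc]
    exact (and_congr_right fun h =>
      notMem_iff_tdist_mem_apart_right hsc hL hcl hx hy hxy (Or.inl h)).trans and_comm
  have hsplit_x := Set.ncard_inter_add_ncard_sdiff_eq_ncard {z | G.Adj x z} L
  have hsplit_y := Set.ncard_inter_add_ncard_sdiff_eq_ncard {z | G.Adj y z} L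
  rw [hx_off, ncard_PSet_union_left disjoint_oneWayOut, ncard_PSet_comm hwdr hcomm {(1, 1)},
    ncard_PSet_comm hwdr hcomm oneWayOut] at hsplit_x
  rw [hy_off, ncard_PSet_union_right disjoint_oneWayIn, ncard_PSet_comm hwdr hcomm apart oneWayIn]
    at hsplit_y
  have hdeg := outDeg_eq_outDeg hwdr x y
  rw [outDeg, outDeg, Nat.card_coe_set_eq, Nat.card_coe_set_eq] at hdeg
  rw [outDeg_induce, outDeg_induce]
  omega

lemma inDeg_induce_add_ncard [Finite V] (hwdr : G.IsWDR) (hcomm : G.IsCommutative)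
    (hL : G.underlying.IsClique L) (hcl : G.underlying.IsCommonNeighborClosed L) (hx : x ∈ L)
    (hy : y ∈ L) (hxy : x ≠ y) :
    (G.induce L).inDeg ⟨x, hx⟩ + (G.PSet oneWayIn apart x y).ncard =
      (G.induce L).inDeg ⟨y, hy⟩ + (G.PSet apart oneWayOut x y).ncard := by
  have hsc := hwdr.1
  have hx_off : {z | G.Adj z x} \ L = G.PSet ({(1, 1)} ∪ oneWayIn) apart x y := by
    ext z
    simp only [Set.mem_sdiff, Set.mem_ofPred_eq, PSet, ← adj_iff_tdist_mem' hsc]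
    exact and_congr_right fun h =>
      notMem_iff_tdist_mem_apart_left hsc hL hcl hx hy hxy (Or.inr h)
  have hy_off : {z | G.Adj z y} \ L = G.PSet apart ({(1, 1)} ∪ oneWayOut) x y := by
    ext z
    simp only [Set.mem_sdiff, Set.mem_ofPred_eq, PSet, ← adj_iff_tdist_mem hsc]
    exact (and_congr_right fun h =>
      notMem_iff_tdist_mem_apart_right hsc hL hcl hx hy hxy (Or.inr h)).trans and_comm
  have hsplit_x := Set.ncard_inter_add_ncard_sdiff_eq_ncard {z | G.Adj z x} L
  have hsplit_y := Set.ncard_inter_add_ncard_sdiff_eq_ncard {z | G.Adj z y} L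
  rw [hx_off, ncard_PSet_union_left disjoint_oneWayIn, ncard_PSet_comm hwdr hcomm {(1, 1)}]
    at hsplit_x
  rw [hy_off, ncard_PSet_union_right disjoint_oneWayOut] at hsplit_y
  have hdeg := inDeg_eq_inDeg hwdr x y
  rw [inDeg, inDeg, Nat.card_coe_set_eq, Nat.card_coe_set_eq] at hdeg
  rw [inDeg_induce, inDeg_induce]
  omega

lemma exists_mem_PSet_oneWayIn_apart [Finite V] (hwdr : G.IsWDR) (hcomm : G.IsCommutative)
    (hL : G.underlying.IsClique L) (hcl : G.underlying.IsCommonNeighborClosed L) (hx : x ∈ L)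
    (hy : y ∈ L) (hxy : G.Adj x y) (hyx : ¬ G.Adj y x) (hz : z ∈ G.PSet apart oneWayOut x y) :
    ∃ t ∈ G.PSet oneWayIn apart x y, G.tdist t z ∈ oneWayOut := by
  have hsc := hwdr.1
  obtain ⟨hxz, hzy⟩ := hz
  rw [tdist_mem_apart_iff hsc] at hxz
  rw [tdist_mem_oneWayOut_iff hsc] at hzy
  obtain ⟨t, hxt, htz⟩ := exists_tdist_swap hwdr hcomm (rfl : G.tdist x y = _)
    (rfl : G.tdist y z = _)
  have hxt' : ¬ G.Adj x t ∧ G.Adj t x := by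
    rw [← tdist_mem_oneWayIn_iff hsc, hxt, tdist_mem_oneWayIn_iff hsc]
    exact hzy.symm
  have htz' : G.tdist t z ∈ oneWayOut := by
    rw [htz, tdist_mem_oneWayOut_iff hsc]
    exact ⟨hxy, hyx⟩
  have hty : t ≠ y := by
    rintro rfl
    exact hyx hxt'.2
  refine ⟨t, ⟨(tdist_mem_oneWayIn_iff hsc).2 hxt', (tdist_mem_apart_iff hsc).2 ⟨hty, ?_⟩⟩, htz'⟩
  intro hty'
  exact hxz.2 (hcl.adj_of_mem_commonNeighbors hL hx hy (ne_of_adj hxy)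
    ⟨Or.inr hxt'.2, hty'.symm⟩ hty ⟨Or.inl ((tdist_mem_oneWayOut_iff hsc).1 htz').1, Or.inr hzy.1⟩
    hxz.1.symm)

lemma eq_of_tdist_mem_oneWayOut (hsc : G.StronglyConnected)
    (hc2 : ∀ u v, G.underlying.dist u v = 2 → cNum G.underlying 2 u v = 2) (hxy : G.Adj x y)
    (ht : t ∈ G.PSet oneWayIn apart x y) (hz₁ : z₁ ∈ G.PSet apart oneWayOut x y)
    (hz₂ : z₂ ∈ G.PSet apart oneWayOut x y) (htz₁ : G.tdist t z₁ ∈ oneWayOut)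
    (htz₂ : G.tdist t z₂ ∈ oneWayOut) : z₁ = z₂ := by
  simp only [PSet, Set.mem_ofPred_eq, tdist_mem_apart_iff hsc, tdist_mem_oneWayIn_iff hsc,
    tdist_mem_oneWayOut_iff hsc] at ht hz₁ hz₂ htz₁ htz₂
  exact eq_of_mem_commonNeighbors hc2 ht.2.1 ht.2.2 (a := x) ⟨Or.inl ht.1.2, Or.inr hxy⟩
    ⟨Or.inl htz₁.1, Or.inr hz₁.2.1⟩ ⟨Or.inl htz₂.1, Or.inr hz₂.2.1⟩ hz₁.1.1.symm hz₂.1.1.symm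

lemma ncard_PSet_apart_oneWayOut_le [Finite V] (hwdr : G.IsWDR) (hcomm : G.IsCommutative)
    (hc2 : ∀ u v, G.underlying.dist u v = 2 → cNum G.underlying 2 u v = 2)
    (hL : G.underlying.IsClique L) (hcl : G.underlying.IsCommonNeighborClosed L) (hx : x ∈ L)
    (hy : y ∈ L) (hxy : G.Adj x y) (hyx : ¬ G.Adj y x) :
    (G.PSet apart oneWayOut x y).ncard ≤ (G.PSet oneWayIn apart x y).ncard :=
  Set.ncard_le_ncard_of_forall_subsingleton (fun z t => G.tdist t z ∈ oneWayOut)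
    (fun _ hz => exists_mem_PSet_oneWayIn_apart hwdr hcomm hL hcl hx hy hxy hyx hz)
    (fun _ ht _ hz₁ _ hz₂ => eq_of_tdist_mem_oneWayOut hwdr.1 hc2 hxy ht hz₁.1 hz₂.1 hz₁.2 hz₂.2)

lemma ncard_PSet_oneWayIn_apart_eq [Finite V] (hwdr : G.IsWDR) (hxy : G.Adj x y)
    (hyx : G.Adj y x) :
    (G.PSet oneWayIn apart x y).ncard = (G.PSet apart oneWayOut x y).ncard := by
  have hsymm : G.tdist x y = G.tdist y x := by
    rw [(tdist_eq_one_one_iff hwdr.1).2 ⟨hxy, hyx⟩, (tdist_eq_one_one_iff hwdr.1).2 ⟨hyx, hxy⟩]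
  rw [ncard_PSet_eq_of_tdist_eq hwdr _ _ hsymm]
  congr 1
  ext z
  simp only [PSet, tdist, oneWayIn, oneWayOut, apart, Set.mem_ofPred_eq]
  tauto

lemma dist_ne_two_of_p_eq_zero [Finite V] (hwdr : G.IsWDR) (hcomm : G.IsCommutative)
    (hZ : ∀ s : ℕ, ((1 : ℕ), s - 1) ∈ G.tdSet → G.p (G.tdist x y) (2, 2) (s - 1, 1) = 0)
    (hxy : G.Adj x y) (hz : z ∈ G.PSet oneWayIn apart x y) : G.dist y z ≠ 2 := by
  have hsc := hwdr.1
  obtain ⟨hxz, hzy⟩ := hz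
  rw [tdist_mem_oneWayIn_iff hsc] at hxz
  intro hyz
  have hzy2 : G.dist z y = 2 := le_antisymm (dist_le_two hxz.2 hxy) hzy.1
  have hxz' : G.tdist x z = (G.dist x z + 1 - 1, 1) := by
    simp [tdist, (dist_eq_one_iff hsc).2 hxz.2]
  refine p_tdist_ne_zero_swap hwdr hcomm hxz' (j := (2, 2)) ?_ <|
    hZ (G.dist x z + 1) ⟨z, x, by simp [tdist, (dist_eq_one_iff hsc).2 hxz.2]⟩
  simp [tdist, hzy2, hyz]

/-- Exchanging the legs of `x ← z → r` yields `t` with `x → t ← r`, a third common neighbour of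
`x` and `r` besides `y` and `z`. -/
lemma not_adj_of_adj_of_dist_ne_two [Finite V] (hwdr : G.IsWDR) (hcomm : G.IsCommutative)
    (hc2 : ∀ u v, G.underlying.dist u v = 2 → cNum G.underlying 2 u v = 2) (hxy : G.Adj x y)
    (hz : z ∈ G.PSet oneWayIn apart x y) (hyz : G.dist y z ≠ 2) (hxr : G.tdist x r ∈ apart)
    (hzr : G.underlying.Adj z r) : ¬ G.Adj y r := by
  have hsc := hwdr.1
  obtain ⟨hxz, hzy⟩ := hz
  rw [tdist_mem_apart_iff hsc] at hxr hzy
  intro hyr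
  have hzr' : G.Adj z r := hzr.resolve_right fun hrz =>
    hyz (le_antisymm (dist_le_two hyr hrz) ((two_le_dist_iff hsc).2
      ⟨hzy.1.symm, fun h => hzy.2 (Or.inr h)⟩))
  obtain ⟨t, hxt, htr⟩ := exists_tdist_swap hwdr hcomm (rfl : G.tdist x z = _)
    (rfl : G.tdist z r = _)
  have hxt' : G.Adj x t := ((adj_iff_tdist_mem hsc).2 (hxt ▸ (adj_iff_tdist_mem hsc).1 hzr'))
  obtain ⟨-, hzx⟩ := (tdist_mem_oneWayIn_iff hsc).1 hxz
  obtain ⟨htr', hrt⟩ := (tdist_mem_oneWayIn_iff hsc).1 (htr ▸ hxz)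
  have hyz' := eq_of_mem_commonNeighbors hc2 hxr.1 hxr.2 (a := t) ⟨Or.inl hxt', Or.inl hrt⟩
    ⟨Or.inl hxy, Or.inr hyr⟩ ⟨Or.inr hzx, hzr.symm⟩ (by rintro rfl; exact htr' hyr)
    (by rintro rfl; exact htr' hzr')
  exact hzy.1 hyz'.symm

lemma exists_mem_PSet_apart_oneWayOut [Finite V] (hwdr : G.IsWDR) (hcomm : G.IsCommutative)
    (hc2 : ∀ u v, G.underlying.dist u v = 2 → cNum G.underlying 2 u v = 2)
    (hL : G.underlying.IsClique L) (hcl : G.underlying.IsCommonNeighborClosed L) (hx : x ∈ L)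
    (hy : y ∈ L) (hxy : G.Adj x y) (hz : z ∈ G.PSet oneWayIn apart x y)
    (hyz : G.dist y z ≠ 2) : ∃ r ∈ G.PSet apart oneWayOut x y, G.underlying.Adj z r := by
  have hsc := hwdr.1
  obtain ⟨hxz, hzy⟩ := id hz
  rw [tdist_mem_oneWayIn_iff hsc] at hxz
  rw [tdist_mem_apart_iff hsc] at hzy
  obtain ⟨r, ⟨hyr, hzr⟩, hrx⟩ := exists_ne_mem_commonNeighbors hc2 hzy.1.symm
    (fun h => hzy.2 h.symm) (a := x) ⟨Or.inr hxy, Or.inl hxz.2⟩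
  have hxr : G.tdist x r ∈ apart := (tdist_mem_apart_iff hsc).2 ⟨hrx.symm, fun hxr => hzy.2
    (hcl.adj_of_mem_commonNeighbors hL hy hx (ne_of_adj hxy).symm ⟨hyr, hxr⟩ hrx
      ⟨G.underlying.adj_symm hzr, Or.inr hxz.2⟩ hzy.1).symm⟩
  have hnyr := not_adj_of_adj_of_dist_ne_two hwdr hcomm hc2 hxy hz hyz hxr hzr
  exact ⟨r, ⟨hxr, (tdist_mem_oneWayOut_iff hsc).2 ⟨hyr.resolve_left hnyr, hnyr⟩⟩, hzr⟩

lemma eq_of_underlying_adj (hsc : G.StronglyConnected)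
    (hc2 : ∀ u v, G.underlying.dist u v = 2 → cNum G.underlying 2 u v = 2) (hxy : G.Adj x y)
    (hr : r ∈ G.PSet apart oneWayOut x y) (hz₁ : z₁ ∈ G.PSet oneWayIn apart x y)
    (hz₂ : z₂ ∈ G.PSet oneWayIn apart x y) (hz₁r : G.underlying.Adj z₁ r)
    (hz₂r : G.underlying.Adj z₂ r) : z₁ = z₂ := by
  simp only [PSet, Set.mem_ofPred_eq, tdist_mem_apart_iff hsc, tdist_mem_oneWayIn_iff hsc,
    tdist_mem_oneWayOut_iff hsc] at hr hz₁ hz₂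
  exact eq_of_mem_commonNeighbors hc2 hr.1.1 hr.1.2 (a := y) ⟨Or.inl hxy, Or.inl hr.2.1⟩
    ⟨Or.inr hz₁.1.2, hz₁r.symm⟩ ⟨Or.inr hz₂.1.2, hz₂r.symm⟩ hz₁.2.1 hz₂.2.1

lemma ncard_PSet_oneWayIn_apart_le [Finite V] (hwdr : G.IsWDR) (hcomm : G.IsCommutative)
    (hc2 : ∀ u v, G.underlying.dist u v = 2 → cNum G.underlying 2 u v = 2)
    (hL : G.underlying.IsClique L) (hcl : G.underlying.IsCommonNeighborClosed L) (hx : x ∈ L)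
    (hy : y ∈ L) (hxy : G.Adj x y)
    (hZ : ∀ s : ℕ, ((1 : ℕ), s - 1) ∈ G.tdSet → G.p (G.tdist x y) (2, 2) (s - 1, 1) = 0) :
    (G.PSet oneWayIn apart x y).ncard ≤ (G.PSet apart oneWayOut x y).ncard :=
  Set.ncard_le_ncard_of_forall_subsingleton (fun z r => G.underlying.Adj z r)
    (fun _ hz => exists_mem_PSet_apart_oneWayOut hwdr hcomm hc2 hL hcl hx hy hxy hz
      (dist_ne_two_of_p_eq_zero hwdr hcomm hZ hxy hz))
    (fun _ hr _ hz₁ _ hz₂ => eq_of_underlying_adj hwdr.1 hc2 hxy hr hz₁.1 hz₂.1 hz₁.2 hz₂.2)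

lemma exists_mem_PSet_oneWayIn_apart_forall_tdist_notMem [Finite V] (hwdr : G.IsWDR)
    (hcomm : G.IsCommutative)
    (hc2 : ∀ u v, G.underlying.dist u v = 2 → cNum G.underlying 2 u v = 2)
    (hL : G.underlying.IsClique L) (hcl : G.underlying.IsCommonNeighborClosed L) (hx : x ∈ L)
    (hy : y ∈ L) (hxy : G.Adj x y) (hyx : ¬ G.Adj y x) (hxw : G.tdist x w = (2, 2))
    (hyw : G.Adj y w) :
    ∃ v ∈ G.PSet oneWayIn apart x y, ∀ z ∈ G.PSet apart oneWayOut x y,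
      G.tdist v z ∉ oneWayOut := by
  have hsc := hwdr.1
  have hxw' : x ≠ w ∧ ¬ G.underlying.Adj x w := (tdist_mem_apart_iff hsc).1 (by simp [hxw, apart])
  obtain ⟨v, hwv, hvx⟩ := exists_adj_adj_of_dist_eq_two hsc (congrArg Prod.snd hxw)
  have hvy : v ≠ y := by
    rintro rfl
    exact hyx hvx
  have hvy' : ¬ G.underlying.Adj v y := fun h => hxw'.2
    (hcl.adj_of_mem_commonNeighbors hL hx hy (ne_of_adj hxy) ⟨Or.inr hvx, G.underlying.adj_symm h⟩
      hvy ⟨Or.inr hwv, Or.inl hyw⟩ hxw'.1.symm)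
  have hcn : ∀ c ∈ G.underlying.commonNeighbors v y, c ≠ x → w = c := fun c hc hcx =>
    eq_of_mem_commonNeighbors hc2 hvy hvy' (a := x) ⟨Or.inl hvx, Or.inr hxy⟩
      ⟨Or.inr hwv, Or.inl hyw⟩ hc hxw'.1.symm hcx
  have hxv : ¬ G.Adj x v := by
    intro hxv
    obtain ⟨t, hvt, hty⟩ := exists_tdist_swap hwdr hcomm (rfl : G.tdist v x = _)
      (rfl : G.tdist x y = _)
    have hvt' := (tdist_mem_oneWayOut_iff hsc).1 (hvt ▸ (tdist_mem_oneWayOut_iff hsc).2 ⟨hxy, hyx⟩)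
    have hty' := (tdist_eq_one_one_iff hsc).1 (hty.trans ((tdist_eq_one_one_iff hsc).2 ⟨hvx, hxv⟩))
    have hwt := hcn t ⟨Or.inl hvt'.1, Or.inr hty'.1⟩ (by rintro rfl; exact hvt'.2 hxv)
    exact hvt'.2 (hwt ▸ hwv)
  refine ⟨v, ⟨(tdist_mem_oneWayIn_iff hsc).2 ⟨hxv, hvx⟩, (tdist_mem_apart_iff hsc).2 ⟨hvy, hvy'⟩⟩,
    fun z ⟨hxz, hzy⟩ hvz => ?_⟩
  rw [tdist_mem_oneWayOut_iff hsc] at hvz hzy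
  have hwz := hcn z ⟨Or.inl hvz.1, Or.inr hzy.1⟩ ((tdist_mem_apart_iff hsc).1 hxz).1.symm
  exact hvz.2 (hwz ▸ hwv)

lemma ncard_PSet_apart_oneWayOut_lt [Finite V] (hwdr : G.IsWDR) (hcomm : G.IsCommutative)
    (hc2 : ∀ u v, G.underlying.dist u v = 2 → cNum G.underlying 2 u v = 2)
    (hL : G.underlying.IsClique L) (hcl : G.underlying.IsCommonNeighborClosed L) (hx : x ∈ L)
    (hy : y ∈ L) (hxy : G.Adj x y) (hyx : ¬ G.Adj y x) {a : ℕ}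
    (hp : G.p (G.tdist x y) (2, 2) (a, 1) ≠ 0) :
    (G.PSet apart oneWayOut x y).ncard < (G.PSet oneWayIn apart x y).ncard := by
  obtain ⟨w, hxw, hwy⟩ := exists_of_p_tdist_ne_zero hwdr hp
  obtain ⟨v, hv, hvz⟩ := exists_mem_PSet_oneWayIn_apart_forall_tdist_notMem hwdr hcomm hc2 hL hcl hx
    hy hxy hyx hxw ((dist_eq_one_iff hwdr.1).1 (congrArg Prod.snd hwy))
  have hle : (G.PSet apart oneWayOut x y).ncard ≤ (G.PSet oneWayIn apart x y \ {v}).ncard := by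
    refine Set.ncard_le_ncard_of_forall_subsingleton (fun z t => G.tdist t z ∈ oneWayOut)
      (fun z hz => ?_) fun _ ht _ hz₁ _ hz₂ =>
        eq_of_tdist_mem_oneWayOut hwdr.1 hc2 hxy ht.1 hz₁.1 hz₂.1 hz₁.2 hz₂.2
    obtain ⟨t, ht, htz⟩ := exists_mem_PSet_oneWayIn_apart hwdr hcomm hL hcl hx hy hxy hyx hz
    exact ⟨t, ⟨ht, fun htv => hvz z hz (Set.mem_singleton_iff.1 htv ▸ htz)⟩, htz⟩
  rw [← Set.ncard_sdiff_singleton_add_one hv]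
  omega

end Digraph

section Line

variable {S : Type*} {n m : ℕ} {o : S} {i : Fin (n + 1)} {α : Fin n → S}

lemma pad_castLE_of_mem_lineSet (hmd : m ≤ n + 1) (hi : i.1 < m) (hα : α ∈ Tset S o m)
    {u : Fin (n + 1) → S} (hu : u ∈ lineSet i α) :
    pad o (n + 1) m (fun j => u (Fin.castLE hmd j)) = u := by
  obtain ⟨b, rfl⟩ := hu
  funext j
  unfold pad
  split_ifs with hj
  · rfl
  · obtain ⟨k, rfl⟩ := Fin.exists_succAbove_eq (show j ≠ i by rintro rfl; omega)
    have hk : (i.succAbove k : ℕ) ≤ k + 1 := by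
      rw [Fin.succAbove]
      split_ifs <;> simp
    simpa using (hα k (by omega)).symm

lemma isClique_lineSet (Γ : Digraph (Fin (n + 1) → S)) (hmd : m ≤ n + 1)
    (hham : (Γ.trunc o m).underlying = hammingGraph (Fin m) S) (hi : i.1 < m)
    (hα : α ∈ Tset S o m) : Γ.underlying.IsClique (lineSet i α) := by
  intro u hu v hv huv
  have hdiff : ∀ j, j ≠ i → u j = v j := by
    obtain ⟨b, rfl⟩ := hu
    obtain ⟨c, rfl⟩ := hv
    intro j hj
    obtain ⟨k, rfl⟩ := Fin.exists_succAbove_eq hj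
    simp
  have hadj : (hammingGraph (Fin m) S).Adj (fun j => u (Fin.castLE hmd j))
      (fun j => v (Fin.castLE hmd j)) := by
    refine ⟨⟨i, hi⟩, fun h => huv (funext fun j => ?_), fun j hj => hdiff _ ?_⟩
    · rcases eq_or_ne j i with rfl | hj
      exacts [h, hdiff j hj]
    · exact fun h => hj (Fin.ext (by simpa using congrArg Fin.val h))
  rw [← hham] at hadj
  have hu' := pad_castLE_of_mem_lineSet hmd hi hα hu
  have hv' := pad_castLE_of_mem_lineSet hmd hi hα hv
  rcases hadj with h | h
  · exact Or.inl (by simpa [Digraph.trunc, hu', hv'] using h)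
  · exact Or.inr (by simpa [Digraph.trunc, hu', hv'] using h)

lemma ncard_lineSet [Finite S] (i : Fin (n + 1)) (α : Fin n → S) :
    (lineSet i α).ncard = Nat.card S := by
  rw [lineSet, ← Nat.card_coe_set_eq, Nat.card_range_of_injective]
  intro a b hab
  simpa using congrFun hab i

end Line

end Paper

open Paper in
theorem prop_degree_main_general {S : Type*} [Finite S] {n : ℕ}
    (Γ : Paper.Digraph (Fin (n + 1) → S)) (q : ℕ) (hq : q = Nat.card S)
    (hwdr : Γ.IsWDR) (hcomm : Γ.IsCommutative)
    (ha1 : ∀ x y, Γ.underlying.dist x y = 1 → aNum Γ.underlying 1 x y = q - 2)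
    (hc2 : ∀ x y, Γ.underlying.dist x y = 2 → cNum Γ.underlying 2 x y = 2)
    (o : S) (m : ℕ) (hmd : m ≤ n + 1)
    (hham : (Γ.trunc o m).underlying = hammingGraph (Fin m) S)
    (i : Fin (n + 1)) (hi : i.1 < m)
    (α : Fin n → S) (hα : α ∈ Tset S o m)
    (x y : Fin (n + 1) → S) (hx : x ∈ lineSet i α) (hy : y ∈ lineSet i α)
    (p : ℕ) (hp2 : 2 ≤ p) (hxy : Γ.tdist x y = (1, p - 1)) :
    ((Γ.line i α).outDeg ⟨x, hx⟩ = (Γ.line i α).outDeg ⟨y, hy⟩ ∧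
      (Γ.line i α).inDeg ⟨x, hx⟩ = (Γ.line i α).inDeg ⟨y, hy⟩ ∧
      (p = 2 ∨ ∀ s : ℕ, ((1 : ℕ), s - 1) ∈ Γ.tdSet → Γ.p (1, p - 1) (2, 2) (s - 1, 1) = 0)) ∨
    ((Γ.line i α).outDeg ⟨y, hy⟩ < (Γ.line i α).outDeg ⟨x, hx⟩ ∧
      (Γ.line i α).inDeg ⟨x, hx⟩ < (Γ.line i α).inDeg ⟨y, hy⟩ ∧
      p ≠ 2 ∧ ∃ s : ℕ, ((1 : ℕ), s - 1) ∈ Γ.tdSet ∧ Γ.p (1, p - 1) (2, 2) (s - 1, 1) ≠ 0) := by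
  have hsc := hwdr.1
  have hL := isClique_lineSet Γ hmd hham hi hα
  have hcl := hL.isCommonNeighborClosed (by rwa [ncard_lineSet, ← hq])
  have hadj : Γ.Adj x y := (Digraph.dist_eq_one_iff hsc).1 (congrArg Prod.fst hxy)
  have hdyx : Γ.dist y x = p - 1 := congrArg Prod.snd hxy
  have hout : (Γ.line i α).outDeg ⟨x, hx⟩ + _ = (Γ.line i α).outDeg ⟨y, hy⟩ + _ :=
    Digraph.outDeg_induce_add_ncard hwdr hcomm hL hcl hx hy (Digraph.ne_of_adj hadj)
  have hin : (Γ.line i α).inDeg ⟨x, hx⟩ + _ = (Γ.line i α).inDeg ⟨y, hy⟩ + _ :=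
    Digraph.inDeg_induce_add_ncard hwdr hcomm hL hcl hx hy (Digraph.ne_of_adj hadj)
  by_cases hyx : Γ.Adj y x
  · have hp : p = 2 := by
      have := (Digraph.dist_eq_one_iff hsc).2 hyx
      omega
    have := Digraph.ncard_PSet_oneWayIn_apart_eq hwdr hadj hyx
    exact Or.inl ⟨by omega, by omega, Or.inl hp⟩
  have hp : p ≠ 2 := fun hp => hyx ((Digraph.dist_eq_one_iff hsc).1 (by omega))
  have hle := Digraph.ncard_PSet_apart_oneWayOut_le hwdr hcomm hc2 hL hcl hx hy hadj hyx
  by_cases hZ : ∀ s : ℕ, ((1 : ℕ), s - 1) ∈ Γ.tdSet → Γ.p (1, p - 1) (2, 2) (s - 1, 1) = 0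
  · have := Digraph.ncard_PSet_oneWayIn_apart_le hwdr hcomm hc2 hL hcl hx hy hadj (hxy ▸ hZ)
    exact Or.inl ⟨by omega, by omega, Or.inr hZ⟩
  · obtain ⟨s, hs, hps⟩ := not_forall₂.1 hZ
    have := Digraph.ncard_PSet_apart_oneWayOut_lt hwdr hcomm hc2 hL hcl hx hy hadj hyx (hxy ▸ hps)
    exact Or.inr ⟨by omega, by omega, hp, s, hs, hps⟩

open Paper in
/-- **Proposition 3.10.** For `x,y ∈ V(Γᵢ(α))` with `(x,y) ∈ Γ_{1,p−1}`
(`p ≥ 2`), exactly one of the following holds: (i) the out- and in-degrees of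
`x` and `y` in `Γᵢ(α)` coincide, and `p = 2` or
`p^{(1,p−1)}_{(2,2),(s−1,1)} = 0` for all `(1,s−1) ∈ ∂̃(Γ)`; (ii)
`d⁺(x) > d⁺(y)`, `d⁻(x) < d⁻(y)`, `p ≠ 2` and
`p^{(1,p−1)}_{(2,2),(s−1,1)} ≠ 0` for some `(1,s−1) ∈ ∂̃(Γ)`. -/
theorem prop_degree_main {S : Type*} [Finite S] {n : ℕ}
    (Γ : Paper.Digraph (Fin (n + 1) → S)) (q : ℕ) (hq : q = Nat.card S)
    (hwdr : Γ.IsWDR) (hcomm : Γ.IsCommutative)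
    (hdrg : IsDRG Γ.underlying)
    (ha1 : ∀ x y, Γ.underlying.dist x y = 1 → aNum Γ.underlying 1 x y = q - 2)
    (hc2 : ∀ x y, Γ.underlying.dist x y = 2 → cNum Γ.underlying 2 x y = 2)
    (o : S) (m : ℕ) (hm1 : 1 ≤ m) (hmd : m ≤ n + 1)
    (hham : (Γ.trunc o m).underlying = hammingGraph (Fin m) S)
    (i : Fin (n + 1)) (hi : i.1 < m)
    (α : Fin n → S) (hα : α ∈ Tset S o m)
    (x y : Fin (n + 1) → S) (hx : x ∈ lineSet i α) (hy : y ∈ lineSet i α)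
    (p : ℕ) (hp2 : 2 ≤ p) (hxy : Γ.tdist x y = (1, p - 1)) :
    ((Γ.line i α).outDeg ⟨x, hx⟩ = (Γ.line i α).outDeg ⟨y, hy⟩ ∧
      (Γ.line i α).inDeg ⟨x, hx⟩ = (Γ.line i α).inDeg ⟨y, hy⟩ ∧
      (p = 2 ∨ ∀ s : ℕ, ((1 : ℕ), s - 1) ∈ Γ.tdSet → Γ.p (1, p - 1) (2, 2) (s - 1, 1) = 0)) ∨
    ((Γ.line i α).outDeg ⟨y, hy⟩ < (Γ.line i α).outDeg ⟨x, hx⟩ ∧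
      (Γ.line i α).inDeg ⟨x, hx⟩ < (Γ.line i α).inDeg ⟨y, hy⟩ ∧
      p ≠ 2 ∧ ∃ s : ℕ, ((1 : ℕ), s - 1) ∈ Γ.tdSet ∧ Γ.p (1, p - 1) (2, 2) (s - 1, 1) ≠ 0) :=
  prop_degree_main_general Γ q hq hwdr hcomm ha1 hc2 o m hmd hham i hi α hα x y hx hy p hp2 hxy
end
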